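/- arXiv:1403.1975 — 2 statements merged into one kernel-verified Lean document; each statement's English description precedes it below -/
import Mathlib

section
/- Let p ≤ q, let A ∈ ℝ^{q×p} have rank p, and let Γ, Ω ∈ ℝ^{q×q} be symmetric positive definite matrices. Then the matrices AᵀΩA and AᵀΓ⁻¹A are invertible, and the difference (AᵀΩA)⁻¹ AᵀΩΓΩA (AᵀΩA)⁻¹ − (AᵀΓ⁻¹A)⁻¹ is positive semi-definite; equivalently, among all symmetric positive definite weight matrices Ω the asymptotic covariance matrix M = (AᵀΩA)⁻¹ AᵀΩΓΩA (AᵀΩA)⁻¹ is minimized, with respect to the positive semi-definite ordering, by the choice Ω = Γ⁻¹, for which M equals (AᵀΓ⁻¹A)⁻¹. -/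
/-!
Any left inverse `B` of `A` gives an unbiased linear estimator with covariance `B Γ Bᴴ`
(Gauss–Markov). With `T = Aᴴ Γ⁻¹ A`, the generalized least squares left inverse
`L = T⁻¹ Aᴴ Γ⁻¹` satisfies `L Γ Lᴴ = T⁻¹`, and `Γ Lᴴ = A T⁻¹` makes `B - L`
`Γ`-orthogonal to `L`, since `(B - L) A = 0`. Hence
`B Γ Bᴴ - T⁻¹ = (B - L) Γ (B - L)ᴴ ⪰ 0`.
The weighted estimator with weight `Ω` is the case `B = (Aᵀ Ω A)⁻¹ Aᵀ Ω`.
-/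

open Matrix

namespace Matrix

theorem mulVec_injective_of_rank_eq_card {m n K : Type*} [Fintype n] [Field K]
    {A : Matrix m n K} (hA : A.rank = Fintype.card n) : Function.Injective A.mulVec :=
  mulVec_injective_iff.2 <| linearIndependent_iff_card_eq_finrank_span.2 <| by
    rw [← hA, rank_eq_finrank_span_cols]; rfl

variable {m n K : Type*} [Fintype m]

theorem IsHermitian.add_mul_mul_conjTranspose_add [Ring K] [StarRing K] {Γ : Matrix m m K}
    (hΓ : Γ.IsHermitian) {L D : Matrix n m K} (hDL : D * Γ * Lᴴ = 0) :
    (L + D) * Γ * (L + D)ᴴ = L * Γ * Lᴴ + D * Γ * Dᴴ := by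
  have hLD : L * Γ * Dᴴ = 0 := by
    simpa only [conjTranspose_mul, conjTranspose_conjTranspose, hΓ.eq, conjTranspose_zero,
      Matrix.mul_assoc] using congrArg (·ᴴ) hDL
  rw [conjTranspose_add, Matrix.add_mul, Matrix.add_mul, Matrix.mul_add, Matrix.mul_add, hLD, hDL,
    add_zero, zero_add]

variable [Fintype n] [DecidableEq m] [DecidableEq n] [Field K] [PartialOrder K] [StarRing K]

theorem PosDef.posSemidef_mul_mul_conjTranspose_sub_inv {Γ : Matrix m m K} (hΓ : Γ.PosDef)
    {A : Matrix m n K} {B : Matrix n m K} (hBA : B * A = 1) :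
    (B * Γ * Bᴴ - (Aᴴ * Γ⁻¹ * A)⁻¹).PosSemidef := by
  have hA : Function.Injective A.mulVec := fun x y hxy => by
    simpa [hBA] using congrArg B.mulVec hxy
  set T := Aᴴ * Γ⁻¹ * A
  have hT : T.PosDef := hΓ.inv.conjTranspose_mul_mul_same hA
  set L := T⁻¹ * Aᴴ * Γ⁻¹
  have hLA : L * A = 1 := by
    rw [Matrix.mul_assoc, Matrix.mul_assoc, ← Matrix.mul_assoc Aᴴ]
    exact nonsing_inv_mul T ((isUnit_iff_isUnit_det T).1 hT.isUnit)
  have hΓL : Γ * Lᴴ = A * T⁻¹ := by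
    rw [conjTranspose_mul, conjTranspose_mul, conjTranspose_conjTranspose, hΓ.inv.isHermitian.eq,
      hT.inv.isHermitian.eq, ← Matrix.mul_assoc, ← Matrix.mul_assoc,
      mul_nonsing_inv Γ ((isUnit_iff_isUnit_det Γ).1 hΓ.isUnit), Matrix.one_mul]
  have hDL : (B - L) * Γ * Lᴴ = 0 := by
    rw [Matrix.mul_assoc, hΓL, ← Matrix.mul_assoc, Matrix.sub_mul, hBA, hLA, sub_self,
      Matrix.zero_mul]
  have hLL : L * Γ * Lᴴ = T⁻¹ := by
    rw [Matrix.mul_assoc, hΓL, ← Matrix.mul_assoc, hLA, Matrix.one_mul]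
  have hB := hΓ.isHermitian.add_mul_mul_conjTranspose_add hDL
  rw [add_sub_cancel, hLL] at hB
  rw [hB, add_sub_cancel_left]
  exact hΓ.posSemidef.mul_mul_conjTranspose_same _

end Matrix

theorem stmt_3_general (p q : ℕ) (A : Matrix (Fin q) (Fin p) ℝ)
    (hA : A.rank = p) (Γ Ω : Matrix (Fin q) (Fin q) ℝ)
    (hΓ : Γ.PosDef) (hΩ : Ω.PosDef) :
    IsUnit (Aᵀ * Ω * A) ∧ IsUnit (Aᵀ * Γ⁻¹ * A) ∧
      ((Aᵀ * Ω * A)⁻¹ * (Aᵀ * Ω * Γ * Ω * A) * (Aᵀ * Ω * A)⁻¹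
        - (Aᵀ * Γ⁻¹ * A)⁻¹).PosSemidef := by
  have hAinj := mulVec_injective_of_rank_eq_card (hA.trans (Fintype.card_fin p).symm)
  have hS := hΩ.conjTranspose_mul_mul_same hAinj
  have hT := hΓ.inv.conjTranspose_mul_mul_same hAinj
  rw [conjTranspose_eq_transpose_of_trivial] at hS hT
  set S := Aᵀ * Ω * A
  set B := S⁻¹ * (Aᵀ * Ω)
  have hBA : B * A = 1 := by
    rw [Matrix.mul_assoc]
    exact nonsing_inv_mul S ((isUnit_iff_isUnit_det S).1 hS.isUnit)
  have hBΓB : B * Γ * Bᵀ = S⁻¹ * (Aᵀ * Ω * Γ * Ω * A) * S⁻¹ := by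
    rw [transpose_mul, transpose_mul, transpose_transpose,
      (isHermitian_iff_isSymm.1 hΩ.isHermitian).eq,
      (isHermitian_iff_isSymm.1 hS.inv.isHermitian).eq]
    simp only [B, Matrix.mul_assoc]
  refine ⟨hS.isUnit, hT.isUnit, ?_⟩
  simpa only [← hBΓB, conjTranspose_eq_transpose_of_trivial] using
    hΓ.posSemidef_mul_mul_conjTranspose_sub_inv hBA

/-- optimality of the weight matrix `Ω = Γ⁻¹` (Corollary 3.3 of the paper).
For `A ∈ ℝ^{q×p}` of full column rank `p ≤ q` and symmetric positive definite `Γ, Ω`,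
the matrices `AᵀΩA` and `AᵀΓ⁻¹A` are invertible and
`(AᵀΩA)⁻¹ AᵀΩΓΩA (AᵀΩA)⁻¹ − (AᵀΓ⁻¹A)⁻¹` is positive semi-definite. -/
theorem stmt_3 (p q : ℕ) (hpq : p ≤ q) (A : Matrix (Fin q) (Fin p) ℝ)
    (hA : A.rank = p) (Γ Ω : Matrix (Fin q) (Fin q) ℝ)
    (hΓ : Γ.PosDef) (hΩ : Ω.PosDef) :
    IsUnit (Aᵀ * Ω * A) ∧ IsUnit (Aᵀ * Γ⁻¹ * A) ∧
      ((Aᵀ * Ω * A)⁻¹ * (Aᵀ * Ω * Γ * Ω * A) * (Aᵀ * Ω * A)⁻¹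
        - (Aᵀ * Γ⁻¹ * A)⁻¹).PosSemidef :=
  stmt_3_general p q A hA Γ Ω hΓ hΩ
end

section
/- Under the stated assumptions, sup_{x ∈ [0,1]^d} |ℓ̂_{n,k}(x) − ℓ(x;θ₀)| converges to 0 in probability as n → ∞; that is, for every ε > 0, P[sup_{x ∈ [0,1]^d} |ℓ̂_{n,k}(x) − ℓ(x;θ₀)| > ε] → 0. -/
/-!
Since `R_{ij} + #{i' | X_{ij} < X_{i'j}} = n`, the point `X_i` is counted by `ℓ̂_{n,k}(x)` iff for
some `j` fewer than `k x_j - 1/2` observations exceed `X_{ij}` in coordinate `j`. Replacing these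
random thresholds by the deterministic marginal quantiles `q_j` with `P(X_{0j} > q_j) = (k/n) y_j`,
for `y = x ± δ`, sandwiches `ℓ̂_{n,k}(x)` between normalised counts `k⁻¹ #{i | ∃ j, X_{ij} > q_j}`,
on the event that every single-coordinate count `k⁻¹ #{i | X_{ij} > q_j}` is within `δ` of its
mean `y_j`. All these counts are binomial with mean `(n/k) p` and variance at most `(n/k) p / k`,
so Chebyshev's inequality gives a weak law of large numbers; the mean of the union count is
`(n/k) P(∃ j, 1 - F_j(X_{0j}) ≤ (k/n) y_j) → ℓ(y)`. This proves pointwise consistency. Finally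
`ℓ(x) ≤ ℓ(y) + ∑ (x_j - y_j)` for `0 ≤ y ≤ x` and `ℓ̂_{n,k}` is monotone, so consistency at the
finitely many points of a grid of mesh `1/N` in `[0,1]^d` is uniform consistency.
-/

open MeasureTheory ProbabilityTheory Filter Topology Finset

/-- The rank `R^n_{ij}` of `X_{ij}` among `X_{1j},…,X_{nj}` (with indices `0,…,n−1`):
the number of `i' < n` with `X_{i'j} ≤ X_{ij}`. -/
noncomputable def rankOf {Ωs : Type*} {d : ℕ} (X : ℕ → Ωs → Fin d → ℝ)
    (n i : ℕ) (j : Fin d) (ω : Ωs) : ℕ :=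
  ((Finset.range n).filter fun i' => X i' ω j ≤ X i ω j).card

/-- The rank-based nonparametric estimator `ℓ̂_{n,k}` of the stable tail dependence
function. -/
noncomputable def hatEll {Ωs : Type*} {d : ℕ} (X : ℕ → Ωs → Fin d → ℝ)
    (k n : ℕ) (ω : Ωs) (x : Fin d → ℝ) : ℝ :=
  (k : ℝ)⁻¹ * ∑ i ∈ Finset.range n,
    if ∃ j : Fin d, ((rankOf X n i j ω : ℝ) > (n : ℝ) + 1/2 - (k : ℝ) * x j)
    then (1:ℝ) else 0

section Quantile

noncomputable def upperQuantile (μ : Measure ℝ) (s : ℝ) : ℝ :=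
  sInf {v | 1 - s ≤ cdf μ v}

variable {μ : Measure ℝ} {s : ℝ}

lemma setOf_le_cdf_eq_Ici (hμ : Continuous (cdf μ)) (hs0 : 0 < s) (hs1 : s < 1) :
    {v | 1 - s ≤ cdf μ v} = Set.Ici (upperQuantile μ s) := by
  set A := {v | 1 - s ≤ cdf μ v}
  have hne : A.Nonempty :=
    ((tendsto_cdf_atTop μ).eventually (eventually_ge_nhds (by linarith))).exists
  have hbdd : BddBelow A := by
    obtain ⟨c, hc⟩ := ((tendsto_cdf_atBot μ).eventually
      (eventually_lt_nhds (by linarith : (0:ℝ) < 1 - s))).exists_forall_of_atBot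
    exact ⟨c, fun v hv => not_lt.1 fun hvc => (hc v hvc.le).not_ge hv⟩
  ext v
  refine ⟨fun hv => csInf_le hbdd hv, fun hv => ?_⟩
  exact ((isClosed_le continuous_const hμ).csInf_mem hne hbdd).trans (monotone_cdf μ hv)

lemma cdf_upperQuantile (hμ : Continuous (cdf μ)) (hs0 : 0 < s) (hs1 : s < 1) :
    cdf μ (upperQuantile μ s) = 1 - s := by
  have hA := setOf_le_cdf_eq_Ici hμ hs0 hs1
  refine le_antisymm ?_ (hA.ge Set.self_mem_Ici)
  have hIio : Set.Iio (upperQuantile μ s) ⊆ {v | cdf μ v ≤ 1 - s} := by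
    intro v hv
    by_contra h
    have h' : 1 - s ≤ cdf μ v := (not_le.1 h).le
    exact (hA.le h' : upperQuantile μ s ≤ v).not_gt (Set.mem_Iio.1 hv)
  exact (isClosed_le hμ continuous_const).closure_subset_iff.2 hIio
    (closure_Iio (upperQuantile μ s) ▸ Set.self_mem_Iic)

variable [IsProbabilityMeasure μ]

lemma measure_singleton_of_continuous_cdf (hμ : Continuous (cdf μ)) (a : ℝ) : μ {a} = 0 := by
  rw [← measure_cdf μ, StieltjesFunction.measure_singleton,
    leftLim_eq_of_tendsto ((hμ.tendsto a).mono_left nhdsWithin_le_nhds), sub_self,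
    ENNReal.ofReal_zero]

lemma measure_Ioi_upperQuantile (hμ : Continuous (cdf μ)) (hs0 : 0 < s) (hs1 : s < 1) :
    μ (Set.Ioi (upperQuantile μ s)) = ENNReal.ofReal s := by
  rw [← Set.compl_Iic, prob_compl_eq_one_sub measurableSet_Iic, ← ofReal_cdf,
    cdf_upperQuantile hμ hs0 hs1, ← ENNReal.ofReal_one, ← ENNReal.ofReal_sub _ (by linarith)]
  ring_nf

lemma measure_setOf_le_cdf_of_pos (hμ : Continuous (cdf μ)) (hs0 : 0 < s) (hs1 : s < 1) :
    μ {v | 1 - s ≤ cdf μ v} = ENNReal.ofReal s := by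
  rw [setOf_le_cdf_eq_Ici hμ hs0 hs1, ← measure_Ioi_upperQuantile hμ hs0 hs1]
  exact measure_congr (Ioi_ae_eq_Ici' (measure_singleton_of_continuous_cdf hμ _)).symm

lemma measure_setOf_le_cdf (hμ : Continuous (cdf μ)) (hs0 : 0 ≤ s) (hs1 : s < 1) :
    μ {v | 1 - s ≤ cdf μ v} = ENNReal.ofReal s := by
  rcases hs0.eq_or_lt with rfl | hs0
  · rw [ENNReal.ofReal_zero, ← nonpos_iff_eq_zero]
    refine ENNReal.le_of_forall_pos_le_add fun ε hε _ => ?_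
    set r := min (ε : ℝ) 2⁻¹
    have hr0 : 0 < r := lt_min hε (by norm_num)
    have hr1 : r < 1 := (min_le_right _ _).trans_lt (by norm_num)
    calc μ {v | 1 - 0 ≤ cdf μ v} ≤ μ {v | 1 - r ≤ cdf μ v} :=
          measure_mono fun v (hv : 1 - 0 ≤ cdf μ v) => show 1 - r ≤ cdf μ v by linarith
      _ = ENNReal.ofReal r := measure_setOf_le_cdf_of_pos hμ hr0 hr1
      _ ≤ 0 + ε := by
          rw [zero_add, ← ENNReal.ofReal_coe_nnreal]
          exact ENNReal.ofReal_le_ofReal (min_le_left _ _)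
  · exact measure_setOf_le_cdf_of_pos hμ hs0 hs1

end Quantile

section Counting

lemma ite_one_zero_le_of_imp {p q : Prop} [Decidable p] [Decidable q] (h : p → q) :
    (if p then (1 : ℝ) else 0) ≤ if q then 1 else 0 := by
  split_ifs <;> simp_all

noncomputable def empCount {Ω : Type*} {d : ℕ} (X : ℕ → Ω → Fin d → ℝ) (n : ℕ)
    (S : Set (Fin d → ℝ)) (ω : Ω) : ℝ :=
  ∑ i ∈ range n, S.indicator 1 (X i ω)

variable {Ω : Type*} {d : ℕ} (X : ℕ → Ω → Fin d → ℝ) (k n : ℕ) (ω : Ω)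

variable {X n} in
lemma empCount_mono {S T : Set (Fin d → ℝ)} (h : S ⊆ T) :
    empCount X n S ω ≤ empCount X n T ω :=
  sum_le_sum fun _ _ => Set.indicator_le_indicator_of_subset h (fun _ => zero_le_one) _

lemma rankOf_gt_iff (i : ℕ) (j : Fin d) (a : ℝ) :
    (rankOf X n i j ω : ℝ) > n + 1 / 2 - a ↔ empCount X n {v | X i ω j < v j} ω < a - 1 / 2 := by
  have hsplit := card_filter_add_card_filter_not (s := range n) (fun i' => X i' ω j ≤ X i ω j)
  have hcount : empCount X n {v | X i ω j < v j} ω = #{i' ∈ range n | ¬X i' ω j ≤ X i ω j} := by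
    simp [empCount, Set.indicator_apply, sum_boole]
  rw [card_range, ← Nat.cast_inj (R := ℝ), Nat.cast_add] at hsplit
  rw [hcount, rankOf]
  constructor <;> intro h <;> linarith

lemma monotone_hatEll : Monotone (hatEll X k n ω) := by
  intro x x' hx
  simp only [hatEll, rankOf_gt_iff]
  refine mul_le_mul_of_nonneg_left (sum_le_sum fun i _ => ?_) (by positivity)
  refine ite_one_zero_le_of_imp fun ⟨j, hj⟩ => ⟨j, hj.trans_le ?_⟩
  have := mul_le_mul_of_nonneg_left (hx j) (Nat.cast_nonneg (α := ℝ) k)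
  linarith

lemma inv_mul_empCount_le_hatEll (x : Fin d → ℝ) (p : Fin d → Prop) (q : Fin d → ℝ)
    (hq : ∀ j, p j → empCount X n {v | q j < v j} ω < k * x j - 1 / 2) :
    (k : ℝ)⁻¹ * empCount X n {v | ∃ j, p j ∧ q j < v j} ω ≤ hatEll X k n ω x := by
  classical
  simp only [hatEll, rankOf_gt_iff]
  rw [empCount]
  simp only [Set.indicator_apply, Pi.one_apply]
  refine mul_le_mul_of_nonneg_left (sum_le_sum fun i _ => ?_) (by positivity)
  refine ite_one_zero_le_of_imp fun ⟨j, hpj, hj⟩ => ⟨j, (hq j hpj).trans_le' ?_⟩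
  exact empCount_mono ω fun v (hv : X i ω j < v j) => (hj.trans hv : q j < v j)

lemma hatEll_le_inv_mul_empCount (x : Fin d → ℝ) (q : Fin d → ℝ)
    (hq : ∀ j, k * x j - 1 / 2 ≤ empCount X n {v | q j < v j} ω) :
    hatEll X k n ω x ≤ (k : ℝ)⁻¹ * empCount X n {v | ∃ j, q j < v j} ω := by
  simp only [hatEll, rankOf_gt_iff]
  rw [empCount]
  simp only [Set.indicator_apply, Pi.one_apply]
  refine mul_le_mul_of_nonneg_left (sum_le_sum fun i _ => ?_) (by positivity)
  refine ite_one_zero_le_of_imp fun ⟨j, hj⟩ => ⟨j, not_le.1 fun hle => ?_⟩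
  have := empCount_mono (X := X) (n := n) (S := {v | q j < v j})
    (T := {v | X i ω j < v j}) ω fun v hv => lt_of_le_of_lt hle hv
  linarith [hq j]

end Counting

section ConvergenceInMeasure

variable {Ω ι κ : Type*} [MeasurableSpace Ω] {μ : Measure Ω} {l : Filter ι}

lemma tendsto_measure_of_eventually_subset {A B : ι → Set Ω} (h : ∀ᶠ i in l, A i ⊆ B i)
    (hB : Tendsto (fun i => μ (B i)) l (𝓝 0)) : Tendsto (fun i => μ (A i)) l (𝓝 0) :=
  tendsto_of_tendsto_of_tendsto_of_le_of_le' tendsto_const_nhds hB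
    (Eventually.of_forall fun _ => zero_le) (h.mono fun _ hi => measure_mono hi)

lemma tendsto_measure_union {A B : ι → Set Ω} (hA : Tendsto (fun i => μ (A i)) l (𝓝 0))
    (hB : Tendsto (fun i => μ (B i)) l (𝓝 0)) : Tendsto (fun i => μ (A i ∪ B i)) l (𝓝 0) :=
  tendsto_of_tendsto_of_tendsto_of_le_of_le tendsto_const_nhds (by simpa using hA.add hB)
    (fun _ => zero_le) fun _ => measure_union_le _ _

lemma tendsto_measure_biUnion_finset (s : Finset κ) {B : κ → ι → Set Ω}
    (hB : ∀ c ∈ s, Tendsto (fun i => μ (B c i)) l (𝓝 0)) :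
    Tendsto (fun i => μ (⋃ c ∈ s, B c i)) l (𝓝 0) :=
  tendsto_of_tendsto_of_tendsto_of_le_of_le tendsto_const_nhds
    (by simpa using tendsto_finsetSum s hB) (fun _ => zero_le)
    fun _ => measure_biUnion_finset_le s _

lemma tendstoInMeasure_const_of_tendsto_variance [IsProbabilityMeasure μ] {Z : ι → Ω → ℝ}
    {c : ℝ} (hZ : ∀ i, MemLp (Z i) 2 μ) (hmean : Tendsto (fun i => μ[Z i]) l (𝓝 c))
    (hvar : Tendsto (fun i => variance (Z i) μ) l (𝓝 0)) :
    TendstoInMeasure μ Z l fun _ => c := by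
  rw [tendstoInMeasure_iff_dist]
  intro ε hε
  have hbound : Tendsto (fun i => ENNReal.ofReal (variance (Z i) μ / (ε / 2) ^ 2)) l (𝓝 0) := by
    simpa using ENNReal.tendsto_ofReal (hvar.div_const ((ε / 2) ^ 2))
  refine tendsto_of_tendsto_of_tendsto_of_le_of_le' tendsto_const_nhds hbound
    (Eventually.of_forall fun _ => zero_le) ?_
  filter_upwards [hmean.eventually (Metric.ball_mem_nhds c (half_pos hε))] with i hi
  refine (measure_mono fun ω (hω : ε ≤ dist (Z i ω) c) => ?_).trans
    (meas_ge_le_variance_div_sq (hZ i) (half_pos hε))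
  have := dist_triangle (Z i ω) (μ[Z i]) c
  show ε / 2 ≤ |Z i ω - μ[Z i]|
  rw [← Real.dist_eq]
  linarith

lemma tendstoInMeasure_const_of_add_le_of_le_sub {Z : ι → Ω → ℝ} {c : ℝ}
    (hupper : ∀ η > 0, Tendsto (fun i => μ {ω | c + η ≤ Z i ω}) l (𝓝 0))
    (hlower : ∀ η > 0, Tendsto (fun i => μ {ω | Z i ω ≤ c - η}) l (𝓝 0)) :
    TendstoInMeasure μ Z l fun _ => c := by
  rw [tendstoInMeasure_iff_dist]
  refine fun ε hε => tendsto_measure_of_eventually_subset (Eventually.of_forall fun i ω hω => ?_)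
    (tendsto_measure_union (hupper ε hε) (hlower ε hε))
  rcases le_abs'.1 (Real.dist_eq _ _ ▸ hω : ε ≤ |Z i ω - c|) with h | h
  · exact Or.inr (show Z i ω ≤ c - ε by linarith)
  · exact Or.inl (show c + ε ≤ Z i ω by linarith)

end ConvergenceInMeasure

section WeakLaw

variable {Ω : Type*} [MeasureSpace Ω] [IsProbabilityMeasure (ℙ : Measure Ω)] {d : ℕ}
  {X : ℕ → Ω → Fin d → ℝ} {S : Set (Fin d → ℝ)}

omit [MeasureSpace Ω] [IsProbabilityMeasure (ℙ : Measure Ω)] in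
lemma empCount_eq_sum (n : ℕ) : empCount X n S = ∑ i ∈ range n, S.indicator 1 ∘ X i := by
  ext ω
  simp [empCount]

lemma memLp_indicator_comp (hX : ∀ i, Measurable (X i)) (hS : MeasurableSet S) (i : ℕ) :
    MemLp (S.indicator (1 : (Fin d → ℝ) → ℝ) ∘ X i) 2 ℙ :=
  .of_bound (((measurable_one (α := ℝ)).indicator hS).comp (hX i)).aestronglyMeasurable 1
    (Eventually.of_forall fun ω => by by_cases h : X i ω ∈ S <;> simp [h])

lemma memLp_empCount (hX : ∀ i, Measurable (X i)) (hS : MeasurableSet S) (n : ℕ) :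
    MemLp (empCount X n S) 2 ℙ := by
  rw [empCount_eq_sum]
  exact memLp_finsetSum' _ fun i _ => memLp_indicator_comp hX hS i

omit [IsProbabilityMeasure (ℙ : Measure Ω)] in
lemma integral_indicator_comp (hX : ∀ i, Measurable (X i))
    (hident : ∀ i, Measure.map (X i) ℙ = Measure.map (X 0) ℙ) (hS : MeasurableSet S) (i : ℕ) :
    ∫ ω, S.indicator (1 : (Fin d → ℝ) → ℝ) (X i ω) = (ℙ (X 0 ⁻¹' S)).toReal := by
  rw [← integral_map (hX i).aemeasurable
    (measurable_one.indicator hS).aestronglyMeasurable, hident i, integral_indicator_one hS,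
    measureReal_def, Measure.map_apply (hX 0) hS]

lemma integral_empCount (hX : ∀ i, Measurable (X i))
    (hident : ∀ i, Measure.map (X i) ℙ = Measure.map (X 0) ℙ) (hS : MeasurableSet S) (n : ℕ) :
    ∫ ω, empCount X n S ω = n * (ℙ (X 0 ⁻¹' S)).toReal := by
  rw [empCount_eq_sum]
  simp only [Finset.sum_apply]
  rw [integral_finsetSum _ fun i _ => (memLp_indicator_comp hX hS i).integrable one_le_two]
  simp only [Function.comp_apply, integral_indicator_comp hX hident hS, sum_const, card_range,
    nsmul_eq_mul]

lemma variance_empCount_le (hX : ∀ i, Measurable (X i)) (hindep : iIndepFun X ℙ)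
    (hident : ∀ i, Measure.map (X i) ℙ = Measure.map (X 0) ℙ) (hS : MeasurableSet S) (n : ℕ) :
    variance (empCount X n S) ℙ ≤ n * (ℙ (X 0 ⁻¹' S)).toReal := by
  have hind : Measurable (S.indicator (1 : (Fin d → ℝ) → ℝ)) := measurable_one.indicator hS
  rw [empCount_eq_sum, IndepFun.variance_sum (fun i _ => memLp_indicator_comp hX hS i)
    fun i _ j _ hij => (hindep.indepFun hij).comp hind hind]
  calc ∑ i ∈ range n, variance (S.indicator 1 ∘ X i) ℙ
      ≤ ∑ i ∈ range n, ∫ ω, (S.indicator 1 ∘ X i) ω ^ 2 := sum_le_sum fun i _ =>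
        variance_le_expectation_sq (hind.comp (hX i)).aestronglyMeasurable
    _ = n * (ℙ (X 0 ⁻¹' S)).toReal := by
      have hsq : ∀ i ω,
          (S.indicator 1 ∘ X i) ω ^ 2 = S.indicator (1 : (Fin d → ℝ) → ℝ) (X i ω) := by
        intro i ω
        by_cases h : X i ω ∈ S <;> simp [h]
      simp only [hsq, integral_indicator_comp hX hident hS, sum_const, card_range, nsmul_eq_mul]

lemma tendstoInMeasure_inv_mul_empCount (hX : ∀ i, Measurable (X i)) (hindep : iIndepFun X ℙ)
    (hident : ∀ i, Measure.map (X i) ℙ = Measure.map (X 0) ℙ) {k : ℕ → ℕ}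
    (hk : Tendsto (fun n => (k n : ℝ)) atTop atTop) {S : ℕ → Set (Fin d → ℝ)}
    (hS : ∀ n, MeasurableSet (S n)) {c : ℝ}
    (hc : Tendsto (fun n => n / k n * (ℙ (X 0 ⁻¹' S n)).toReal) atTop (𝓝 c)) :
    TendstoInMeasure ℙ (fun n ω => (k n : ℝ)⁻¹ * empCount X n (S n) ω) atTop fun _ => c := by
  refine tendstoInMeasure_const_of_tendsto_variance
    (fun n => (memLp_empCount hX (hS n) n).const_mul _) (hc.congr fun n => ?_) ?_
  · rw [integral_const_mul, integral_empCount hX hident (hS n)]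
    ring
  have hvar : ∀ n, variance (fun ω => (k n : ℝ)⁻¹ * empCount X n (S n) ω) ℙ
      ≤ n / k n * (ℙ (X 0 ⁻¹' S n)).toReal / k n := fun n => by
    rw [variance_const_mul]
    calc (k n : ℝ)⁻¹ ^ 2 * variance (empCount X n (S n)) ℙ
        ≤ (k n : ℝ)⁻¹ ^ 2 * (n * (ℙ (X 0 ⁻¹' S n)).toReal) :=
          mul_le_mul_of_nonneg_left (variance_empCount_le hX hindep hident (hS n) n) (by positivity)
      _ = n / k n * (ℙ (X 0 ⁻¹' S n)).toReal / k n := by ring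
  exact tendsto_of_tendsto_of_tendsto_of_le_of_le tendsto_const_nhds (hc.div_atTop hk)
    (fun n => variance_nonneg _ _) hvar

end WeakLaw

section TailModel

variable {Ω : Type*} [MeasureSpace Ω] [IsProbabilityMeasure (ℙ : Measure Ω)] {d : ℕ}
  {X : ℕ → Ω → Fin d → ℝ}

noncomputable def marginal (X : ℕ → Ω → Fin d → ℝ) (j : Fin d) : Measure ℝ :=
  (ℙ : Measure Ω).map fun ω => X 0 ω j

lemma isProbabilityMeasure_marginal (hX : Measurable (X 0)) (j : Fin d) :
    IsProbabilityMeasure (marginal X j) :=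
  Measure.isProbabilityMeasure_map hX.eval.aemeasurable

lemma cdf_marginal_apply (hX : Measurable (X 0)) (j : Fin d) (t : ℝ) :
    cdf (marginal X j) t = (ℙ {ω | X 0 ω j ≤ t}).toReal := by
  have := isProbabilityMeasure_marginal hX j
  rw [cdf_eq_real, measureReal_def, marginal, Measure.map_apply hX.eval measurableSet_Iic]
  rfl

noncomputable def tailEvent (X : ℕ → Ω → Fin d → ℝ) (t : ℝ) (x : Fin d → ℝ) : Set Ω :=
  {ω | ∃ j, 1 - cdf (marginal X j) (X 0 ω j) ≤ t * x j}

variable (hX : Measurable (X 0)) (hcont : ∀ j, Continuous (cdf (marginal X j)))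
include hX hcont

lemma measure_le_cdf_marginal (j : Fin d) {s : ℝ} (hs0 : 0 ≤ s) (hs1 : s < 1) :
    ℙ {ω | 1 - s ≤ cdf (marginal X j) (X 0 ω j)} = ENNReal.ofReal s := by
  have := isProbabilityMeasure_marginal hX j
  rw [← measure_setOf_le_cdf (hcont j) hs0 hs1]
  exact (Measure.map_apply hX.eval (measurableSet_le measurable_const (hcont j).measurable)).symm

lemma upperQuantile_lt_ae_eq (j : Fin d) {s : ℝ} (hs0 : 0 < s) (hs1 : s < 1) :
    {ω | upperQuantile (marginal X j) s < X 0 ω j}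
      =ᵐ[ℙ] {ω | 1 - s ≤ cdf (marginal X j) (X 0 ω j)} := by
  have := isProbabilityMeasure_marginal hX j
  have h := ae_eq_comp hX.eval.aemeasurable <| Ioi_ae_eq_Ici' <|
    measure_singleton_of_continuous_cdf (hcont j) (upperQuantile (marginal X j) s)
  rw [← setOf_le_cdf_eq_Ici (hcont j) hs0 hs1] at h
  exact h

lemma measure_upperQuantile_lt (j : Fin d) {s : ℝ} (hs0 : 0 < s) (hs1 : s < 1) :
    ℙ {ω | upperQuantile (marginal X j) s < X 0 ω j} = ENNReal.ofReal s := by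
  rw [measure_congr (upperQuantile_lt_ae_eq hX hcont j hs0 hs1),
    measure_le_cdf_marginal hX hcont j hs0.le hs1]

lemma upperQuantile_lt_ae_eq_tailEvent {t : ℝ} (ht : 0 < t) {y : Fin d → ℝ} (hy : 0 ≤ y)
    (hy1 : ∀ j, t * y j < 1) :
    {ω | ∃ j, 0 < y j ∧ upperQuantile (marginal X j) (t * y j) < X 0 ω j}
      =ᵐ[ℙ] tailEvent X t y := by
  rw [tailEvent, Set.ofPred_exists, Set.ofPred_exists]
  refine EventuallyEq.iUnion fun j => ?_
  have hset : {ω | 1 - cdf (marginal X j) (X 0 ω j) ≤ t * y j}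
      = {ω | 1 - t * y j ≤ cdf (marginal X j) (X 0 ω j)} := by
    ext ω
    simp only [Set.mem_ofPred_eq]
    constructor <;> intro h <;> linarith
  rw [hset]
  rcases (show (0 : ℝ) ≤ y j from hy j).lt_or_eq with hyj | hyj
  · simpa only [hyj, true_and] using upperQuantile_lt_ae_eq hX hcont j (mul_pos ht hyj) (hy1 j)
  · simp only [← hyj, lt_irrefl, false_and, Set.ofPred_false]
    refine (ae_eq_empty.2 ?_).symm
    simpa using measure_le_cdf_marginal hX hcont j le_rfl one_pos

lemma measure_tailEvent_le_add {t : ℝ} (ht : 0 ≤ t) {x y : Fin d → ℝ} (hy : 0 ≤ y) (hyx : y ≤ x)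
    (hx1 : ∀ j, t * x j < 1) :
    ℙ (tailEvent X t x) ≤ ℙ (tailEvent X t y) + ENNReal.ofReal (t * ∑ j, (x j - y j)) := by
  set A : (Fin d → ℝ) → Fin d → Set Ω :=
    fun z j => {ω | 1 - t * z j ≤ cdf (marginal X j) (X 0 ω j)}
  have hdiff : ∀ j, ℙ (A x j \ A y j) = ENNReal.ofReal (t * (x j - y j)) := by
    intro j
    have hyx' : t * y j ≤ t * x j := mul_le_mul_of_nonneg_left (hyx j) ht
    have hsub : A y j ⊆ A x j := fun ω (hω : 1 - t * y j ≤ _) => show 1 - t * x j ≤ _ by linarith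
    have hmeas : MeasurableSet (A y j) :=
      measurableSet_le measurable_const ((hcont j).measurable.comp hX.eval)
    rw [measure_sdiff hsub hmeas.nullMeasurableSet (measure_ne_top _ _),
      measure_le_cdf_marginal hX hcont j (mul_nonneg ht ((hy j).trans (hyx j))) (hx1 j),
      measure_le_cdf_marginal hX hcont j (mul_nonneg ht (hy j)) (hyx'.trans_lt (hx1 j)),
      ← ENNReal.ofReal_sub _ (mul_nonneg ht (hy j)), mul_sub]
  calc ℙ (tailEvent X t x) ≤ ℙ (tailEvent X t y ∪ ⋃ j ∈ univ, (A x j \ A y j)) := by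
        refine measure_mono fun ω ⟨j, hj⟩ => ?_
        by_cases hyj : 1 - cdf (marginal X j) (X 0 ω j) ≤ t * y j
        · exact Or.inl ⟨j, hyj⟩
        · refine Or.inr (Set.mem_biUnion (mem_univ j) ⟨show 1 - t * x j ≤ _ by linarith, ?_⟩)
          exact fun h : 1 - t * y j ≤ _ => hyj (by linarith)
    _ ≤ ℙ (tailEvent X t y) + ∑ j, ℙ (A x j \ A y j) :=
        (measure_union_le _ _).trans (add_le_add_right (measure_biUnion_finset_le _ _) _)
    _ = ℙ (tailEvent X t y) + ENNReal.ofReal (t * ∑ j, (x j - y j)) := by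
        rw [mul_sum, ENNReal.ofReal_sum_of_nonneg fun j _ => mul_nonneg ht (sub_nonneg.2 (hyx j))]
        simp only [hdiff]

lemma le_add_sum_of_tendsto_tailEvent {ℓ : (Fin d → ℝ) → ℝ}
    (htail : ∀ x : Fin d → ℝ, 0 ≤ x →
      Tendsto (fun t : ℝ => t⁻¹ * (ℙ (tailEvent X t x)).toReal) (𝓝[>] 0) (𝓝 (ℓ x)))
    {x y : Fin d → ℝ} (hy : 0 ≤ y) (hyx : y ≤ x) : ℓ x ≤ ℓ y + ∑ j, (x j - y j) := by
  refine le_of_tendsto_of_tendsto (htail x (hy.trans hyx)) ((htail y hy).add tendsto_const_nhds) ?_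
  have hsmall : ∀ᶠ t in 𝓝[>] (0 : ℝ), ∀ j, t * x j < 1 := eventually_all.2 fun j =>
    (tendsto_nhdsWithin_of_tendsto_nhds ((continuous_id.mul continuous_const).tendsto' 0 0
      (zero_mul _))).eventually (gt_mem_nhds one_pos)
  filter_upwards [self_mem_nhdsWithin, hsmall] with t (ht : 0 < t) hx1
  have h := ENNReal.toReal_mono (by finiteness)
    (measure_tailEvent_le_add hX hcont ht.le hy hyx hx1)
  rw [ENNReal.toReal_add (measure_ne_top _ _) ENNReal.ofReal_ne_top,
    ENNReal.toReal_ofReal (mul_nonneg ht.le (sum_nonneg fun j _ => sub_nonneg.2 (hyx j)))] at h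
  calc t⁻¹ * (ℙ (tailEvent X t x)).toReal
      ≤ t⁻¹ * ((ℙ (tailEvent X t y)).toReal + t * ∑ j, (x j - y j)) :=
        mul_le_mul_of_nonneg_left h (inv_nonneg.2 ht.le)
    _ = t⁻¹ * (ℙ (tailEvent X t y)).toReal + ∑ j, (x j - y j) := by field_simp

lemma le_add_mul_of_tendsto_tailEvent {ℓ : (Fin d → ℝ) → ℝ}
    (htail : ∀ x : Fin d → ℝ, 0 ≤ x →
      Tendsto (fun t : ℝ => t⁻¹ * (ℙ (tailEvent X t x)).toReal) (𝓝[>] 0) (𝓝 (ℓ x)))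
    {x y : Fin d → ℝ} (hy : 0 ≤ y) (hyx : y ≤ x) {δ : ℝ} (hδ : ∀ j, x j - y j ≤ δ) :
    ℓ x ≤ ℓ y + d * δ := by
  have hsum : ∑ j, (x j - y j) ≤ d * δ :=
    (sum_le_sum fun j _ => hδ j).trans_eq (by simp)
  linarith [le_add_sum_of_tendsto_tailEvent hX hcont htail hy hyx]

end TailModel

section Pointwise

lemma natCast_mul_div_le (d : ℕ) {η : ℝ} (hη : 0 ≤ η) : (d : ℝ) * (η / (2 * (d + 1))) ≤ η / 2 := by
  rw [mul_div_assoc', div_le_div_iff₀ (by positivity) two_pos]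
  nlinarith

variable {Ω : Type*} [MeasureSpace Ω] [IsProbabilityMeasure (ℙ : Measure Ω)] {d : ℕ}
  {X : ℕ → Ω → Fin d → ℝ} {k : ℕ → ℕ}
  (hX : ∀ i, Measurable (X i)) (hindep : iIndepFun X ℙ)
  (hident : ∀ i, Measure.map (X i) ℙ = Measure.map (X 0) ℙ)
  (hcont : ∀ j, Continuous (cdf (marginal X j)))
  (hk : Tendsto (fun n => (k n : ℝ)) atTop atTop)
  (hkn : Tendsto (fun n => (k n : ℝ) / n) atTop (𝓝 0))

include hk hkn in
lemma eventually_pos_and_mul_lt_one (c : ℝ) :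
    ∀ᶠ n in atTop, 0 < (k n : ℝ) ∧ 0 < (n : ℝ) ∧ (k n : ℝ) / n * c < 1 := by
  filter_upwards [hk.eventually_gt_atTop 0, eventually_gt_atTop 0,
    (hkn.mul_const c).eventually (gt_mem_nhds (by rw [zero_mul]; exact one_pos))]
    with n hkpos hn h1
  exact ⟨hkpos, Nat.cast_pos.2 hn, h1⟩

include hX hindep hident hcont hk hkn in
lemma tendstoInMeasure_inv_mul_empCount_upperQuantile_lt (j : Fin d) {y : ℝ} (hy : 0 < y) :
    TendstoInMeasure ℙ (fun n ω => (k n : ℝ)⁻¹ *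
      empCount X n {v | upperQuantile (marginal X j) (k n / n * y) < v j} ω) atTop fun _ => y := by
  refine tendstoInMeasure_inv_mul_empCount hX hindep hident hk
    (fun n => measurableSet_lt measurable_const (measurable_pi_apply j))
    (tendsto_const_nhds.congr' ?_)
  filter_upwards [eventually_pos_and_mul_lt_one hk hkn y] with n ⟨hkpos, hn, h1⟩
  have ht : 0 < (k n : ℝ) / n * y := by positivity
  rw [show X 0 ⁻¹' {v | upperQuantile (marginal X j) (k n / n * y) < v j}
      = {ω | upperQuantile (marginal X j) (k n / n * y) < X 0 ω j} from rfl,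
    measure_upperQuantile_lt (hX 0) hcont j ht h1, ENNReal.toReal_ofReal ht.le]
  field_simp

include hX hindep hident hcont hk hkn in
lemma tendstoInMeasure_inv_mul_empCount_exists_upperQuantile_lt {y : Fin d → ℝ} (hy : 0 ≤ y) {c : ℝ}
    (htail : Tendsto (fun t : ℝ => t⁻¹ * (ℙ (tailEvent X t y)).toReal) (𝓝[>] 0) (𝓝 c)) :
    TendstoInMeasure ℙ (fun n ω => (k n : ℝ)⁻¹ * empCount X n
      {v | ∃ j, 0 < y j ∧ upperQuantile (marginal X j) (k n / n * y j) < v j} ω)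
      atTop fun _ => c := by
  have ht : Tendsto (fun n => (k n : ℝ) / n) atTop (𝓝[>] 0) := tendsto_nhdsWithin_iff.2
    ⟨hkn, (eventually_pos_and_mul_lt_one hk hkn 0).mono fun n h => div_pos h.1 h.2.1⟩
  refine tendstoInMeasure_inv_mul_empCount hX hindep hident hk (fun n => ?_)
    ((htail.comp ht).congr' ?_)
  · exact measurableSet_setOfPred.2 (Measurable.exists fun j => measurable_const.and
      (measurableSet_setOfPred.1 (measurableSet_lt measurable_const (measurable_pi_apply j))))
  have hmax : ∀ᶠ n in atTop, ∀ j, (k n : ℝ) / n * y j < 1 := eventually_all.2 fun j =>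
    (eventually_pos_and_mul_lt_one hk hkn (y j)).mono fun n h => h.2.2
  filter_upwards [eventually_pos_and_mul_lt_one hk hkn 0, hmax] with n ⟨hkpos, hn, _⟩ h1
  rw [Function.comp_apply, inv_div, ← measure_congr
    (upperQuantile_lt_ae_eq_tailEvent (hX 0) hcont (div_pos hkpos hn) hy h1)]
  rfl

variable {ℓ : (Fin d → ℝ) → ℝ}
  (htail : ∀ x : Fin d → ℝ, 0 ≤ x →
    Tendsto (fun t : ℝ => t⁻¹ * (ℙ (tailEvent X t x)).toReal) (𝓝[>] 0) (𝓝 (ℓ x)))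

include hX hindep hident hcont hk hkn htail in
lemma tendsto_measure_add_le_hatEll {x : Fin d → ℝ} (hx : 0 ≤ x) {η : ℝ} (hη : 0 < η) :
    Tendsto (fun n => ℙ {ω | ℓ x + η ≤ hatEll X (k n) n ω x}) atTop (𝓝 0) := by
  set δ := η / (2 * (d + 1))
  have hδ : 0 < δ := by positivity
  set y : Fin d → ℝ := fun j => x j + δ
  have hy : ∀ j, 0 < y j := fun j => add_pos_of_nonneg_of_pos (hx j) hδ
  have hℓ : ℓ y ≤ ℓ x + η / 2 := by
    linarith [natCast_mul_div_le d hη.le, le_add_mul_of_tendsto_tailEvent (hX 0) hcont htail hx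
      (fun j => le_add_of_nonneg_right hδ.le : x ≤ y) fun j => (add_sub_cancel_left _ _).le]
  set q : ℕ → Fin d → ℝ := fun n j => upperQuantile (marginal X j) (k n / n * y j)
  have hcoord := fun j => tendstoInMeasure_iff_dist.1
    (tendstoInMeasure_inv_mul_empCount_upperQuantile_lt hX hindep hident hcont hk hkn j (hy j)) δ hδ
  have hunion := tendstoInMeasure_iff_dist.1
    (tendstoInMeasure_inv_mul_empCount_exists_upperQuantile_lt hX hindep hident hcont hk hkn
      (fun j => (hy j).le) (htail y fun j => (hy j).le)) (η / 2) (half_pos hη)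
  simp only [hy, true_and] at hunion
  refine tendsto_measure_of_eventually_subset ?_
    (tendsto_measure_union (tendsto_measure_biUnion_finset univ fun j _ => hcoord j) hunion)
  -- Off the bad events every coordinate count exceeds `k x_j`, so `hatEll` at `x` only counts
  -- points exceeding some `q n j`.
  filter_upwards [hk.eventually_gt_atTop 0] with n hkpos ω (hω : ℓ x + η ≤ _)
  by_contra hbad
  simp only [Set.mem_union, Set.mem_iUnion, Set.mem_ofPred_eq, mem_univ, exists_true_left,
    not_or, not_exists, not_le, Real.dist_eq] at hbad
  obtain ⟨hcount, hcountUnion⟩ := hbad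
  have hle := hatEll_le_inv_mul_empCount X (k n) n ω x (q n) fun j => by
    have h := (abs_lt.1 (hcount j)).1
    have : (k n : ℝ) * x j < empCount X n {v | q n j < v j} ω := by
      rw [← lt_inv_mul_iff₀ hkpos]
      simp only [y] at h
      linarith
    linarith
  linarith [(abs_lt.1 hcountUnion).2]

include hX hindep hident hcont hk hkn htail in
lemma tendsto_measure_hatEll_le_sub {x : Fin d → ℝ} (hx : 0 ≤ x) {η : ℝ} (hη : 0 < η) :
    Tendsto (fun n => ℙ {ω | hatEll X (k n) n ω x ≤ ℓ x - η}) atTop (𝓝 0) := by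
  set δ := η / (2 * (d + 1))
  have hδ : 0 < δ := by positivity
  set y : Fin d → ℝ := fun j => max (x j - δ) 0
  have hy : 0 ≤ y := fun j => le_max_right _ _
  have hyx : y ≤ x := fun j => max_le (by linarith) (hx j)
  have hℓ : ℓ x ≤ ℓ y + η / 2 := by
    linarith [natCast_mul_div_le d hη.le, le_add_mul_of_tendsto_tailEvent (hX 0) hcont htail hy hyx
      fun j => by linarith [le_max_left (x j - δ) 0]]
  set q : ℕ → Fin d → ℝ := fun n j => upperQuantile (marginal X j) (k n / n * y j)
  have hcoord : ∀ j ∈ univ.filter fun j => 0 < y j, _ := fun j hj =>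
    tendstoInMeasure_iff_dist.1
      (tendstoInMeasure_inv_mul_empCount_upperQuantile_lt hX hindep hident hcont hk hkn j
        (mem_filter.1 hj).2) (δ / 2) (half_pos hδ)
  have hunion := tendstoInMeasure_iff_dist.1
    (tendstoInMeasure_inv_mul_empCount_exists_upperQuantile_lt hX hindep hident hcont hk hkn hy
      (htail y hy)) (η / 2) (half_pos hη)
  refine tendsto_measure_of_eventually_subset ?_
    (tendsto_measure_union (tendsto_measure_biUnion_finset _ hcoord) hunion)
  filter_upwards [hk.eventually_gt_atTop 0, hk.eventually_ge_atTop δ⁻¹]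
    with n hkpos hkδ ω (hω : _ ≤ ℓ x - η)
  by_contra hbad
  simp only [Set.mem_union, Set.mem_iUnion, Set.mem_ofPred_eq, mem_filter, mem_univ, true_and,
    not_or, not_exists, not_le, Real.dist_eq] at hbad
  obtain ⟨hcount, hcountUnion⟩ := hbad
  have hge := inv_mul_empCount_le_hatEll X (k n) n ω x (fun j => 0 < y j) (q n) fun j hyj => by
    have h := (abs_lt.1 (hcount j hyj)).2
    have hyj' : y j = x j - δ := max_eq_left (not_le.1 fun h => hyj.ne' (max_eq_right h)).le
    -- `k δ ≥ 1` absorbs the offset `1/2` of the rank condition.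
    have hkδ' : 1 ≤ (k n : ℝ) * δ := by rwa [inv_le_iff_one_le_mul₀ hδ] at hkδ
    have : empCount X n {v | q n j < v j} ω < k n * (x j - δ / 2) := by
      rw [← inv_mul_lt_iff₀ hkpos]
      linarith
    nlinarith
  linarith [(abs_lt.1 hcountUnion).1]

include hX hindep hident hcont hk hkn htail in
lemma tendstoInMeasure_hatEll {x : Fin d → ℝ} (hx : 0 ≤ x) :
    TendstoInMeasure ℙ (fun n ω => hatEll X (k n) n ω x) atTop fun _ => ℓ x :=
  tendstoInMeasure_const_of_add_le_of_le_sub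
    (fun _ hη => tendsto_measure_add_le_hatEll hX hindep hident hcont hk hkn htail hx hη)
    (fun _ hη => tendsto_measure_hatEll_le_sub hX hindep hident hcont hk hkn htail hx hη)

end Pointwise

section Grid

variable {d : ℕ} {N : ℕ}

noncomputable def gridPoint (N : ℕ) (c : Fin d → Fin (N + 1)) : Fin d → ℝ :=
  fun j => (c j : ℝ) / N

lemma gridPoint_nonneg (c : Fin d → Fin (N + 1)) : 0 ≤ gridPoint N c :=
  fun j => by simp only [gridPoint]; positivity

lemma exists_gridPoint_le (hN : 0 < N) {x : Fin d → ℝ} (hx0 : 0 ≤ x) (hx1 : x ≤ 1) :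
    ∃ c, gridPoint N c ≤ x ∧ ∀ j, x j - gridPoint N c j ≤ 1 / N := by
  have hN' : (0 : ℝ) < N := Nat.cast_pos.2 hN
  have hfloor : ∀ j, ⌊N * x j⌋₊ < N + 1 := fun j => Nat.lt_succ_of_le <| Nat.floor_le_of_le <| by
    simpa using mul_le_of_le_one_right hN'.le (hx1 j)
  refine ⟨fun j => ⟨_, hfloor j⟩, fun j => ?_, fun j => ?_⟩
  · rw [gridPoint, div_le_iff₀' hN']
    exact Nat.floor_le (mul_nonneg hN'.le (hx0 j))
  · have := Nat.lt_floor_add_one (N * x j)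
    rw [gridPoint, sub_le_iff_le_add, ← add_div, le_div_iff₀ hN']
    simp only
    linarith

lemma exists_le_gridPoint (hN : 0 < N) {x : Fin d → ℝ} (hx0 : 0 ≤ x) (hx1 : x ≤ 1) :
    ∃ c, x ≤ gridPoint N c ∧ ∀ j, gridPoint N c j - x j ≤ 1 / N := by
  have hN' : (0 : ℝ) < N := Nat.cast_pos.2 hN
  have hceil : ∀ j, ⌈N * x j⌉₊ < N + 1 := fun j => Nat.lt_succ_of_le <| Nat.ceil_le.2 <| by
    simpa using mul_le_of_le_one_right hN'.le (hx1 j)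
  refine ⟨fun j => ⟨_, hceil j⟩, fun j => ?_, fun j => ?_⟩
  · rw [gridPoint, le_div_iff₀' hN']
    exact Nat.le_ceil _
  · have := Nat.ceil_lt_add_one (mul_nonneg hN'.le (hx0 j))
    rw [gridPoint, sub_le_iff_le_add, div_le_iff₀ hN', add_mul, one_div_mul_cancel hN'.ne']
    simp only
    linarith

lemma iSup_abs_sub_le_of_forall_gridPoint {f g : (Fin d → ℝ) → ℝ} (hf : Monotone f)
    (hg : ∀ x y : Fin d → ℝ, 0 ≤ y → y ≤ x → (∀ j, x j - y j ≤ 1 / N) → g x ≤ g y + d * (1 / N))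
    (hN : 0 < N) {a : ℝ}
    (hgrid : ∀ c, |f (gridPoint N c) - g (gridPoint N c)| ≤ a) :
    ⨆ x : Set.univ.pi fun _ : Fin d => Set.Icc (0 : ℝ) 1, |f x.1 - g x.1| ≤ a + d / N := by
  refine Real.iSup_le (fun ⟨x, hx⟩ => ?_) (add_nonneg ((abs_nonneg _).trans (hgrid 0)) ?_)
  · have hx0 : 0 ≤ x := fun j => (Set.mem_univ_pi.1 hx j).1
    have hx1 : x ≤ 1 := fun j => (Set.mem_univ_pi.1 hx j).2
    obtain ⟨c, hcx, hc⟩ := exists_gridPoint_le hN hx0 hx1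
    obtain ⟨c', hxc', hc'⟩ := exists_le_gridPoint hN hx0 hx1
    have hlow := hg x (gridPoint N c) (gridPoint_nonneg c) hcx hc
    have hup := hg (gridPoint N c') x hx0 hxc' hc'
    have := abs_le.1 (hgrid c)
    have := abs_le.1 (hgrid c')
    rw [abs_le, ← mul_one_div]
    constructor <;> linarith [hf hcx, hf hxc']
  · positivity

end Grid

theorem stmt_13_general {Ωs : Type*} [MeasureSpace Ωs] [IsProbabilityMeasure (ℙ : Measure Ωs)]
    (d : ℕ)
    (X : ℕ → Ωs → Fin d → ℝ) (hXmeas : ∀ i, Measurable (X i))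
    (hindep : iIndepFun X ℙ)
    (hident : ∀ i, Measure.map (X i) ℙ = Measure.map (X 0) ℙ)
    (F : Fin d → ℝ → ℝ) (hF : ∀ j t, F j t = (ℙ {ω | X 0 ω j ≤ t}).toReal)
    (hFcont : ∀ j, Continuous (F j))
    (ℓ : (Fin d → ℝ) → ℝ)
    (htail : ∀ x : Fin d → ℝ, (∀ j, 0 ≤ x j) →
      Tendsto (fun t : ℝ => t⁻¹ * (ℙ {ω | ∃ j, 1 - F j (X 0 ω j) ≤ t * x j}).toReal)
        (nhdsWithin 0 (Set.Ioi 0)) (nhds (ℓ x)))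
    (k : ℕ → ℕ)
    (hkinfty : Tendsto (fun n => (k n : ℝ)) atTop atTop)
    (hkn : Tendsto (fun n => (k n : ℝ) / n) atTop (nhds 0)) :
    ∀ ε > (0:ℝ),
      Tendsto
        (fun n => ℙ {ω | ε <
          ⨆ x : (Set.univ.pi fun _ : Fin d => Set.Icc (0:ℝ) 1),
            |hatEll X (k n) n ω x.1 - ℓ x.1|})
        atTop (nhds 0) := by
  obtain rfl : F = fun j => ⇑(cdf (marginal X j)) :=
    funext fun j => funext fun t => (hF j t).trans (cdf_marginal_apply (hXmeas 0) j t).symm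
  intro ε hε
  obtain ⟨N, hN⟩ := exists_nat_gt (2 * d / ε)
  have hN0 : 0 < N := by exact_mod_cast (by positivity : (0 : ℝ) ≤ 2 * d / ε).trans_lt hN
  have hdN : (d : ℝ) / N < ε / 2 := by
    rw [div_lt_iff₀ hε] at hN
    rw [div_lt_iff₀ (by exact_mod_cast hN0)]
    linarith
  have hgrid : ∀ c, Tendsto (fun n => ℙ {ω | ε / 2 ≤ dist (hatEll X (k n) n ω (gridPoint N c))
      (ℓ (gridPoint N c))}) atTop (𝓝 0) := fun c => tendstoInMeasure_iff_dist.1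
    (tendstoInMeasure_hatEll hXmeas hindep hident hFcont hkinfty hkn htail (gridPoint_nonneg c))
      _ (half_pos hε)
  refine tendsto_measure_of_eventually_subset (Eventually.of_forall fun n ω hω => ?_)
    (tendsto_measure_biUnion_finset univ fun c _ => hgrid c)
  by_contra hbad
  simp only [Set.mem_iUnion, mem_univ, exists_true_left, Set.mem_ofPred_eq, not_exists, not_le,
    Real.dist_eq] at hbad
  have := iSup_abs_sub_le_of_forall_gridPoint (monotone_hatEll X (k n) n ω)
    (fun x y hy hyx => le_add_mul_of_tendsto_tailEvent (hXmeas 0) hFcont htail hy hyx) hN0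
    fun c => (hbad c).le
  exact not_lt.2 (this.trans (by linarith)) hω

/-- uniform consistency of the nonparametric estimator `ℓ̂_{n,k}`:
`sup_{x ∈ [0,1]^d} |ℓ̂_{n,k}(x) − ℓ(x;θ₀)| → 0` in probability. -/
theorem stmt_13 {Ωs : Type*} [MeasureSpace Ωs] [IsProbabilityMeasure (ℙ : Measure Ωs)]
    (d : ℕ) (hd : 2 ≤ d)
    (X : ℕ → Ωs → Fin d → ℝ) (hXmeas : ∀ i, Measurable (X i))
    (hindep : iIndepFun X ℙ)
    (hident : ∀ i, Measure.map (X i) ℙ = Measure.map (X 0) ℙ)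
    (F : Fin d → ℝ → ℝ) (hF : ∀ j t, F j t = (ℙ {ω | X 0 ω j ≤ t}).toReal)
    (hFcont : ∀ j, Continuous (F j))
    (ℓ : (Fin d → ℝ) → ℝ)
    (htail : ∀ x : Fin d → ℝ, (∀ j, 0 ≤ x j) →
      Tendsto (fun t : ℝ => t⁻¹ * (ℙ {ω | ∃ j, 1 - F j (X 0 ω j) ≤ t * x j}).toReal)
        (nhdsWithin 0 (Set.Ioi 0)) (nhds (ℓ x)))
    (k : ℕ → ℕ) (hk1 : ∀ n, 1 ≤ n → 1 ≤ k n ∧ k n ≤ n)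
    (hkinfty : Tendsto (fun n => (k n : ℝ)) atTop atTop)
    (hkn : Tendsto (fun n => (k n : ℝ) / n) atTop (nhds 0)) :
    ∀ ε > (0:ℝ),
      Tendsto
        (fun n => ℙ {ω | ε <
          ⨆ x : (Set.univ.pi fun _ : Fin d => Set.Icc (0:ℝ) 1),
            |hatEll X (k n) n ω x.1 - ℓ x.1|})
        atTop (nhds 0) :=
  stmt_13_general d X hXmeas hindep hident F hF hFcont ℓ htail k hkinfty hkn
end
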